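/- arXiv:2205.08235 — 3 statements merged into one kernel-verified Lean document; each statement's English description precedes it below -/
import Mathlib

section
/- Let G be a connected graph with a bridge e = {v1, v2} whose removal yields components G1 (containing v1) and G2 (containing v2), with m1, m2 edges respectively, and let m = m1 + m2 + 1. Then d_G^T R_G d_G = d_{G1}^T R_{G1} d_{G1} + d_{G2}^T R_{G2} d_{G2} + 4(m2+1)·d_{G1}^T R_{G1} e_{v1} + 4(m1+1)·d_{G2}^T R_{G2} e_{v2} + 2(2m1+1)(2m2+1). -/
open SimpleGraph Finset Matrix
open scoped Classical

noncomputable section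

/-- Number of spanning trees of `G`. -/
noncomputable def tau {V : Type*} [Fintype V] (G : SimpleGraph V) : ℕ :=
  Set.ncard {H : SimpleGraph V | H ≤ G ∧ H.Connected ∧ H.IsAcyclic}

/-- Number of 2-tree spanning forests of `G` separating `i` and `j`. -/
noncomputable def twoForest {V : Type*} [Fintype V] (G : SimpleGraph V) (i j : V) : ℕ :=
  Set.ncard {H : SimpleGraph V | H ≤ G ∧ H.IsAcyclic ∧ ¬ H.Reachable i j ∧
    ∀ v, H.Reachable i v ∨ H.Reachable j v}

/-- The four Penrose equations: `B` is the Moore–Penrose inverse of `A`. -/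
def IsMoorePenroseInv {n : Type*} [Fintype n] (A B : Matrix n n ℝ) : Prop :=
  A * B * A = A ∧ B * A * B = B ∧ (A * B)ᵀ = A * B ∧ (B * A)ᵀ = B * A

/-- Laplacian matrix of a graph. -/
noncomputable def lap {V : Type*} [Fintype V] [DecidableEq V] (G : SimpleGraph V) :
    Matrix V V ℝ :=
  fun i j => if i = j then (G.degree i : ℝ) else if G.Adj i j then -1 else 0

/-- Effective resistance computed from a (Moore–Penrose inverse) matrix `Ld`. -/
noncomputable def effRes {V : Type*} [Fintype V] [DecidableEq V] (Ld : Matrix V V ℝ)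
    (i j : V) : ℝ :=
  (Pi.single i 1 - Pi.single j 1) ⬝ᵥ Ld.mulVec (Pi.single i 1 - Pi.single j 1)

/-- Transition matrix of the simple random walk on `G`. -/
noncomputable def transP {V : Type*} [Fintype V] (G : SimpleGraph V) : Matrix V V ℝ :=
  fun i j => if G.Adj i j then (1 : ℝ) / (G.degree i) else 0

/-- Stationary distribution of the simple random walk. -/
noncomputable def statPi {V : Type*} [Fintype V] (G : SimpleGraph V) (i : V) : ℝ :=
  (G.degree i : ℝ) / (2 * G.edgeFinset.card)

/-- `M` is the matrix of mean first passage times of the random walk on `G`. -/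
def IsMFPT {V : Type*} [Fintype V] (G : SimpleGraph V) (M : V → V → ℝ) : Prop :=
  (∀ j, M j j = 0) ∧ ∀ i j, i ≠ j → M i j = 1 + ∑ k, transP G i k * M k j

/-- Kemeny's constant. -/
noncomputable def kemeny {V : Type*} [Fintype V] (G : SimpleGraph V) (M : V → V → ℝ) : ℝ :=
  ∑ i, ∑ j ∈ Finset.univ.filter (· ≠ i), statPi G i * M i j * statPi G j

/-- Accessibility index of vertex `v`. -/
noncomputable def acc {V : Type*} [Fintype V] (G : SimpleGraph V) (M : V → V → ℝ) (v : V) : ℝ :=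
  ∑ i ∈ Finset.univ.filter (· ≠ v), statPi G i * M i v

/-- Joining `G1` and `G2` by the bridge `v1 ∼ v2`. -/
def chainTwo {V1 V2 : Type*} (G1 : SimpleGraph V1) (G2 : SimpleGraph V2)
    (v1 : V1) (v2 : V2) : SimpleGraph (V1 ⊕ V2) where
  Adj p q :=
    match p, q with
    | Sum.inl a, Sum.inl b => G1.Adj a b
    | Sum.inr a, Sum.inr b => G2.Adj a b
    | Sum.inl a, Sum.inr b => a = v1 ∧ b = v2
    | Sum.inr a, Sum.inl b => b = v1 ∧ a = v2
  symm := ⟨by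
    rintro (a | a) (b | b) h
    · exact G1.adj_symm h
    · exact ⟨h.1, h.2⟩
    · exact ⟨h.1, h.2⟩
    · exact G2.adj_symm h⟩
  loopless := ⟨by
    rintro (a | a) h
    · exact G1.irrefl h
    · exact G2.irrefl h⟩

end

/-!
Effective resistances are potential differences: if `L y = e_i - e_j` then
`effRes Ld i j = y i - y j`, and on a connected graph such a `y` exists because `L Ld` fixes
every vector orthogonal to the constants. Potentials of `G1` and `G2`, extended by constants
or glued across the bridge, are potentials of the joined graph, so its resistance restricts to
those of `G1` and `G2` on each side and is `R₁(i, v1) + 1 + R₂(v2, j)` across the bridge.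
Writing its degrees as `d_{Gk} + e_{vk}` with `∑ d_{Gk} = 2 mk` and expanding the quadratic
form gives the identity.
-/

section MoorePenrose

variable {n : Type*} [Fintype n] {L Ld : Matrix n n ℝ} {x y : n → ℝ}

namespace IsMoorePenroseInv

theorem dotProduct_mulVec_eq (hMP : IsMoorePenroseInv L Ld) (hL : Lᵀ = L)
    (hy : L *ᵥ y = x) : x ⬝ᵥ Ld *ᵥ x = y ⬝ᵥ x := by
  subst hy
  rw [mulVec_mulVec, dotProduct_mulVec, vecMul_mulVec, hL, ← Matrix.mul_assoc, hMP.1,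
    ← dotProduct_mulVec]

/-- `P = L Ld` is the orthogonal projection onto the range of `L`, and for symmetric `L`
the range of `L` is the orthogonal complement of its kernel. -/
theorem mulVec_mulVec_eq_self (hMP : IsMoorePenroseInv L Ld) (hL : Lᵀ = L)
    (hx : ∀ z, L *ᵥ z = 0 → z ⬝ᵥ x = 0) : L *ᵥ (Ld *ᵥ x) = x := by
  set P := L * Ld
  have hPL : P * L = L := hMP.1
  have hLP : L * P = L := by
    have := congrArg transpose hPL
    rwa [transpose_mul, hL, hMP.2.2.1] at this
  have hPP : P * P = P := by rw [← Matrix.mul_assoc, hPL]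
  set r := x - P *ᵥ x
  have hLr : L *ᵥ r = 0 := by
    rw [mulVec_sub, mulVec_mulVec, hLP, sub_self]
  have hPr : P *ᵥ r = 0 := by
    rw [mulVec_sub, mulVec_mulVec, hPP, sub_self]
  have hrr : r ⬝ᵥ r = 0 := by
    have hrPx : r ⬝ᵥ P *ᵥ x = 0 := by
      rw [dotProduct_mulVec, ← mulVec_transpose, hMP.2.2.1, hPr, zero_dotProduct]
    rw [show r ⬝ᵥ r = r ⬝ᵥ x - r ⬝ᵥ P *ᵥ x from dotProduct_sub r x _, hx r hLr, hrPx, sub_self]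
  have hr : r = 0 := dotProduct_self_eq_zero.mp hrr
  rw [mulVec_mulVec]
  exact (sub_eq_zero.mp hr).symm

end IsMoorePenroseInv

variable [DecidableEq n]

theorem effRes_eq_sub_of_mulVec_eq (hMP : IsMoorePenroseInv L Ld) (hL : Lᵀ = L) {i j : n}
    (hy : L *ᵥ y = Pi.single i 1 - Pi.single j 1) : effRes Ld i j = y i - y j := by
  rw [effRes, hMP.dotProduct_mulVec_eq hL hy, dotProduct_sub, dotProduct_single,
    dotProduct_single, mul_one, mul_one]

theorem effRes_comm (M : Matrix n n ℝ) (i j : n) : effRes M i j = effRes M j i := by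
  rw [effRes, effRes, ← neg_sub, mulVec_neg, dotProduct_neg, neg_dotProduct, neg_neg]

@[simp]
theorem effRes_self (M : Matrix n n ℝ) (i : n) : effRes M i i = 0 := by
  simp [effRes]

end MoorePenrose

section Laplacian

variable {V : Type*} [Fintype V] [DecidableEq V]

theorem lap_eq_lapMatrix (G : SimpleGraph V) : lap G = G.lapMatrix ℝ := by
  ext i j
  by_cases h : i = j
  · subst h; simp [lap, lapMatrix, degMatrix, adjMatrix]
  · simp only [lap, lapMatrix, degMatrix, adjMatrix, Matrix.sub_apply, diagonal_apply_ne _ h,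
      if_neg h, of_apply, zero_sub]
    split_ifs <;> simp

theorem lap_transpose (G : SimpleGraph V) : (lap G)ᵀ = lap G := by
  rw [lap_eq_lapMatrix]; exact G.isSymm_lapMatrix (R := ℝ)

theorem lap_mulVec_const (G : SimpleGraph V) (c : ℝ) : lap G *ᵥ (fun _ => c) = 0 := by
  rw [lap_eq_lapMatrix, lapMatrix_mulVec_eq_zero_iff_forall_adj]
  exact fun _ _ _ => rfl

theorem lap_mulVec_apply (G : SimpleGraph V) (y : V → ℝ) (v : V) :
    (lap G *ᵥ y) v = ∑ u, if G.Adj v u then y v - y u else 0 := by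
  rw [lap_eq_lapMatrix, lapMatrix_mulVec_apply, degree_eq_sum_if_adj (R := ℝ), Finset.sum_mul,
    neighborFinset_eq_filter, Finset.sum_filter, ← Finset.sum_sub_distrib]
  exact Finset.sum_congr rfl fun u _ => by split_ifs <;> simp

theorem lap_mulVec_mulVec_single_sub {G : SimpleGraph V} (hG : G.Connected)
    {Ld : Matrix V V ℝ} (hLd : IsMoorePenroseInv (lap G) Ld) (i j : V) :
    lap G *ᵥ (Ld *ᵥ (Pi.single i 1 - Pi.single j 1)) = Pi.single i 1 - Pi.single j 1 :=
  hLd.mulVec_mulVec_eq_self (lap_transpose G) fun z hz => by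
    rw [lap_eq_lapMatrix, lapMatrix_mulVec_eq_zero_iff_forall_reachable] at hz
    simp [dotProduct_sub, hz i j (hG.preconnected i j)]

end Laplacian

section BridgeAlgebra

variable {ι κ : Type*} [Fintype ι] [Fintype κ]

theorem sum_sum_mul_add_one_add_mul (a f : ι → ℝ) (b g : κ → ℝ) :
    ∑ i, ∑ j, a i * (f i + 1 + g j) * b j =
      (∑ i, a i * f i) * ∑ j, b j + (∑ i, a i) * ∑ j, b j + (∑ i, a i) * ∑ j, g j * b j := by
  simp only [mul_add, add_mul, mul_one, Finset.sum_add_distrib, Finset.sum_mul_sum]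
  refine congrArg₂ _ (congrArg₂ _ ?_ ?_) ?_ <;>
    exact Finset.sum_congr rfl fun _ _ => Finset.sum_congr rfl fun _ _ => by ring

variable [DecidableEq ι] [DecidableEq κ]

theorem sum_add_ite_mul_of_eq_zero (w r : ι → ℝ) {u : ι} (hu : r u = 0) :
    ∑ i, (w i + if i = u then 1 else 0) * r i = ∑ i, w i * r i := by
  simp [add_mul, Finset.sum_add_distrib, hu]

theorem sum_sum_add_ite_mul_mul (w : ι → ℝ) (R : ι → ι → ℝ) (u : ι)
    (hR : ∀ i j, R i j = R j i) (hu : R u u = 0) :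
    ∑ i, ∑ j, (w i + if i = u then 1 else 0) * R i j * (w j + if j = u then 1 else 0) =
      ∑ i, ∑ j, w i * R i j * w j + 2 * ∑ i, w i * R i u := by
  simp only [add_mul, mul_add, ite_mul, mul_ite, one_mul, mul_one, zero_mul, mul_zero,
    Finset.sum_add_distrib, Finset.sum_ite_eq', Finset.mem_univ, if_true,
    Finset.sum_ite_irrel, Finset.sum_const_zero, hu]
  simp only [hR u, mul_comm (R _ u)]
  ring

/-- `R` models two blocks joined in series by a unit resistor between `u₁` and `u₂`. -/
theorem sum_sum_mul_mul_of_bridge (w : ι ⊕ κ → ℝ) (R : ι ⊕ κ → ι ⊕ κ → ℝ)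
    (w₁ : ι → ℝ) (w₂ : κ → ℝ) (R₁ : ι → ι → ℝ) (R₂ : κ → κ → ℝ) (u₁ : ι) (u₂ : κ)
    (hw₁ : ∀ i, w (.inl i) = w₁ i + if i = u₁ then 1 else 0)
    (hw₂ : ∀ j, w (.inr j) = w₂ j + if j = u₂ then 1 else 0)
    (hR : ∀ p q, R p q = R q p) (hR₀ : ∀ p, R p p = 0)
    (hR₁₁ : ∀ i i', R (.inl i) (.inl i') = R₁ i i')
    (hR₂₂ : ∀ j j', R (.inr j) (.inr j') = R₂ j j')
    (hR₁₂ : ∀ i j, R (.inl i) (.inr j) = R₁ i u₁ + 1 + R₂ u₂ j) :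
    ∑ p, ∑ q, w p * R p q * w q =
      ∑ i, ∑ i', w₁ i * R₁ i i' * w₁ i' + ∑ j, ∑ j', w₂ j * R₂ j j' * w₂ j' +
      2 * (∑ j, w₂ j + 2) * ∑ i, w₁ i * R₁ i u₁ + 2 * (∑ i, w₁ i + 2) * ∑ j, w₂ j * R₂ j u₂ +
      2 * (∑ i, w₁ i + 1) * (∑ j, w₂ j + 1) := by
  have hR₁ : ∀ i i', R₁ i i' = R₁ i' i := fun i i' => by rw [← hR₁₁, hR, hR₁₁]
  have hR₂ : ∀ j j', R₂ j j' = R₂ j' j := fun j j' => by rw [← hR₂₂, hR, hR₂₂]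
  have hR₁u : R₁ u₁ u₁ = 0 := by rw [← hR₁₁, hR₀]
  have hR₂u : R₂ u₂ u₂ = 0 := by rw [← hR₂₂, hR₀]
  have hR₂₁ : ∀ j i, R (.inr j) (.inl i) = R₂ j u₂ + 1 + R₁ u₁ i := fun j i => by
    rw [hR, hR₁₂, hR₁ i, hR₂ u₂]; ring
  have hS₁ : ∑ i, w (.inl i) = ∑ i, w₁ i + 1 := by simp [hw₁, Finset.sum_add_distrib]
  have hS₂ : ∑ j, w (.inr j) = ∑ j, w₂ j + 1 := by simp [hw₂, Finset.sum_add_distrib]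
  have hA : ∑ i, w (.inl i) * R₁ i u₁ = ∑ i, w₁ i * R₁ i u₁ := by
    simp only [hw₁]; exact sum_add_ite_mul_of_eq_zero _ _ hR₁u
  have hA' : ∑ i, R₁ u₁ i * w (.inl i) = ∑ i, w₁ i * R₁ i u₁ := by
    rw [← hA]; exact Finset.sum_congr rfl fun i _ => by rw [hR₁]; ring
  have hB : ∑ j, w (.inr j) * R₂ j u₂ = ∑ j, w₂ j * R₂ j u₂ := by
    simp only [hw₂]; exact sum_add_ite_mul_of_eq_zero _ _ hR₂u
  have hB' : ∑ j, R₂ u₂ j * w (.inr j) = ∑ j, w₂ j * R₂ j u₂ := by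
    rw [← hB]; exact Finset.sum_congr rfl fun j _ => by rw [hR₂]; ring
  simp only [Fintype.sum_sum_type, Finset.sum_add_distrib, hR₁₁, hR₂₂, hR₁₂, hR₂₁,
    sum_sum_mul_add_one_add_mul, hS₁, hS₂, hA, hA', hB, hB']
  simp only [hw₁, hw₂, sum_sum_add_ite_mul_mul _ _ _ hR₁ hR₁u,
    sum_sum_add_ite_mul_mul _ _ _ hR₂ hR₂u]
  ring

end BridgeAlgebra

namespace chainTwo

variable {V1 V2 : Type*} {G1 : SimpleGraph V1} {G2 : SimpleGraph V2} {v1 : V1} {v2 : V2}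

@[simp]
theorem adj_inl_inl {a b : V1} : (chainTwo G1 G2 v1 v2).Adj (.inl a) (.inl b) ↔ G1.Adj a b :=
  Iff.rfl

@[simp]
theorem adj_inr_inr {a b : V2} : (chainTwo G1 G2 v1 v2).Adj (.inr a) (.inr b) ↔ G2.Adj a b :=
  Iff.rfl

@[simp]
theorem adj_inl_inr {a : V1} {b : V2} :
    (chainTwo G1 G2 v1 v2).Adj (.inl a) (.inr b) ↔ a = v1 ∧ b = v2 :=
  Iff.rfl

@[simp]
theorem adj_inr_inl {a : V1} {b : V2} :
    (chainTwo G1 G2 v1 v2).Adj (.inr b) (.inl a) ↔ a = v1 ∧ b = v2 :=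
  Iff.rfl

variable [Fintype V1] [Fintype V2] [DecidableEq V1] [DecidableEq V2]

theorem degree_inl (a : V1) :
    ((chainTwo G1 G2 v1 v2).degree (.inl a) : ℝ) = G1.degree a + if a = v1 then 1 else 0 := by
  rw [degree_eq_sum_if_adj, Fintype.sum_sum_type, degree_eq_sum_if_adj]
  by_cases h : a = v1 <;> simp [h]

theorem degree_inr (b : V2) :
    ((chainTwo G1 G2 v1 v2).degree (.inr b) : ℝ) = G2.degree b + if b = v2 then 1 else 0 := by
  rw [degree_eq_sum_if_adj, Fintype.sum_sum_type, degree_eq_sum_if_adj, add_comm]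
  by_cases h : b = v2 <;> simp [h]

theorem lap_mulVec_inl (y : V1 ⊕ V2 → ℝ) (a : V1) :
    (lap (chainTwo G1 G2 v1 v2) *ᵥ y) (.inl a) =
      (lap G1 *ᵥ (y ∘ .inl)) a + if a = v1 then y (.inl v1) - y (.inr v2) else 0 := by
  rw [lap_mulVec_apply, lap_mulVec_apply, Fintype.sum_sum_type]
  by_cases h : a = v1 <;> simp [h]

theorem lap_mulVec_inr (y : V1 ⊕ V2 → ℝ) (b : V2) :
    (lap (chainTwo G1 G2 v1 v2) *ᵥ y) (.inr b) =
      (lap G2 *ᵥ (y ∘ .inr)) b + if b = v2 then y (.inr v2) - y (.inl v1) else 0 := by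
  rw [lap_mulVec_apply, lap_mulVec_apply, Fintype.sum_sum_type, add_comm]
  by_cases h : b = v2 <;> simp [h]

variable {Ld : Matrix (V1 ⊕ V2) (V1 ⊕ V2) ℝ} {Ld1 : Matrix V1 V1 ℝ} {Ld2 : Matrix V2 V2 ℝ}

theorem effRes_inl_inl (h1 : G1.Connected) (hLd : IsMoorePenroseInv (lap (chainTwo G1 G2 v1 v2)) Ld)
    (hLd1 : IsMoorePenroseInv (lap G1) Ld1) (i j : V1) :
    effRes Ld (.inl i) (.inl j) = effRes Ld1 i j := by
  obtain ⟨y1, hy1⟩ : ∃ y, lap G1 *ᵥ y = Pi.single i 1 - Pi.single j 1 :=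
    ⟨_, lap_mulVec_mulVec_single_sub h1 hLd1 i j⟩
  have hy : lap (chainTwo G1 G2 v1 v2) *ᵥ Sum.elim y1 (fun _ => y1 v1) =
      Pi.single (.inl i) 1 - Pi.single (.inl j) 1 := by
    funext p
    cases p with
    | inl a => rw [lap_mulVec_inl, Sum.elim_comp_inl, hy1]; simp [Pi.single_apply]
    | inr b => rw [lap_mulVec_inr, Sum.elim_comp_inr, lap_mulVec_const]; simp
  rw [effRes_eq_sub_of_mulVec_eq hLd (lap_transpose _) hy,
    effRes_eq_sub_of_mulVec_eq hLd1 (lap_transpose _) hy1, Sum.elim_inl, Sum.elim_inl]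

theorem effRes_inr_inr (h2 : G2.Connected) (hLd : IsMoorePenroseInv (lap (chainTwo G1 G2 v1 v2)) Ld)
    (hLd2 : IsMoorePenroseInv (lap G2) Ld2) (i j : V2) :
    effRes Ld (.inr i) (.inr j) = effRes Ld2 i j := by
  obtain ⟨y2, hy2⟩ : ∃ y, lap G2 *ᵥ y = Pi.single i 1 - Pi.single j 1 :=
    ⟨_, lap_mulVec_mulVec_single_sub h2 hLd2 i j⟩
  have hy : lap (chainTwo G1 G2 v1 v2) *ᵥ Sum.elim (fun _ => y2 v2) y2 =
      Pi.single (.inr i) 1 - Pi.single (.inr j) 1 := by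
    funext p
    cases p with
    | inl a => rw [lap_mulVec_inl, Sum.elim_comp_inl, lap_mulVec_const]; simp
    | inr b => rw [lap_mulVec_inr, Sum.elim_comp_inr, hy2]; simp [Pi.single_apply]
  rw [effRes_eq_sub_of_mulVec_eq hLd (lap_transpose _) hy,
    effRes_eq_sub_of_mulVec_eq hLd2 (lap_transpose _) hy2, Sum.elim_inr, Sum.elim_inr]

/-- Series law across the bridge: glue the potentials of `i → v1` in `G1` and of `v2 → j` in
`G2`, shifting the first so that the unit current drops potential `1` along the bridge. -/
theorem effRes_inl_inr (h1 : G1.Connected) (h2 : G2.Connected)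
    (hLd : IsMoorePenroseInv (lap (chainTwo G1 G2 v1 v2)) Ld)
    (hLd1 : IsMoorePenroseInv (lap G1) Ld1) (hLd2 : IsMoorePenroseInv (lap G2) Ld2)
    (i : V1) (j : V2) :
    effRes Ld (.inl i) (.inr j) = effRes Ld1 i v1 + 1 + effRes Ld2 v2 j := by
  obtain ⟨y1, hy1⟩ : ∃ y, lap G1 *ᵥ y = Pi.single i 1 - Pi.single v1 1 :=
    ⟨_, lap_mulVec_mulVec_single_sub h1 hLd1 i v1⟩
  obtain ⟨y2, hy2⟩ : ∃ y, lap G2 *ᵥ y = Pi.single v2 1 - Pi.single j 1 :=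
    ⟨_, lap_mulVec_mulVec_single_sub h2 hLd2 v2 j⟩
  set c := 1 - y1 v1 + y2 v2
  have hy : lap (chainTwo G1 G2 v1 v2) *ᵥ Sum.elim (y1 + fun _ => c) y2 =
      Pi.single (.inl i) 1 - Pi.single (.inr j) 1 := by
    funext p
    cases p with
    | inl a =>
      rw [lap_mulVec_inl, Sum.elim_comp_inl, mulVec_add, lap_mulVec_const, add_zero, hy1]
      by_cases ha : a = v1
      · simp [Pi.single_apply, ha, c]; ring
      · simp [Pi.single_apply, ha]
    | inr b =>
      rw [lap_mulVec_inr, Sum.elim_comp_inr, hy2]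
      by_cases hb : b = v2
      · simp [Pi.single_apply, hb, c]; ring
      · simp [Pi.single_apply, hb]
  rw [effRes_eq_sub_of_mulVec_eq hLd (lap_transpose _) hy,
    effRes_eq_sub_of_mulVec_eq hLd1 (lap_transpose _) hy1,
    effRes_eq_sub_of_mulVec_eq hLd2 (lap_transpose _) hy2]
  simp only [Sum.elim_inl, Sum.elim_inr, Pi.add_apply, c]
  ring

end chainTwo

/-- with `G` obtained by joining `G1` and `G2` with the bridge
`v1 ∼ v2`, `d_Gᵀ R_G d_G` decomposes as stated. -/
theorem dRd_chainTwo {V1 V2 : Type*} [Fintype V1] [Fintype V2]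
    [DecidableEq V1] [DecidableEq V2]
    (G1 : SimpleGraph V1) (G2 : SimpleGraph V2) (v1 : V1) (v2 : V2)
    (h1 : G1.Connected) (h2 : G2.Connected)
    (Ld : Matrix (V1 ⊕ V2) (V1 ⊕ V2) ℝ) (Ld1 : Matrix V1 V1 ℝ) (Ld2 : Matrix V2 V2 ℝ)
    (hLd : IsMoorePenroseInv (lap (chainTwo G1 G2 v1 v2)) Ld)
    (hLd1 : IsMoorePenroseInv (lap G1) Ld1)
    (hLd2 : IsMoorePenroseInv (lap G2) Ld2)
    (m1 m2 : ℕ) (hm1 : m1 = G1.edgeFinset.card) (hm2 : m2 = G2.edgeFinset.card) :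
    (∑ p, ∑ q, ((chainTwo G1 G2 v1 v2).degree p : ℝ) * effRes Ld p q *
        ((chainTwo G1 G2 v1 v2).degree q : ℝ)) =
      (∑ i, ∑ j, (G1.degree i : ℝ) * effRes Ld1 i j * (G1.degree j : ℝ)) +
      (∑ i, ∑ j, (G2.degree i : ℝ) * effRes Ld2 i j * (G2.degree j : ℝ)) +
      4 * ((m2 : ℝ) + 1) * (∑ i, (G1.degree i : ℝ) * effRes Ld1 i v1) +
      4 * ((m1 : ℝ) + 1) * (∑ i, (G2.degree i : ℝ) * effRes Ld2 i v2) +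
      2 * (2 * (m1 : ℝ) + 1) * (2 * (m2 : ℝ) + 1) := by
  have hS1 : ∑ i, (G1.degree i : ℝ) = 2 * m1 := by
    rw [← Nat.cast_sum, G1.sum_degrees_eq_twice_card_edges, hm1]; push_cast; rfl
  have hS2 : ∑ i, (G2.degree i : ℝ) = 2 * m2 := by
    rw [← Nat.cast_sum, G2.sum_degrees_eq_twice_card_edges, hm2]; push_cast; rfl
  rw [sum_sum_mul_mul_of_bridge _ _ _ _ _ _ v1 v2 chainTwo.degree_inl chainTwo.degree_inr
    (effRes_comm Ld) (effRes_self Ld) (chainTwo.effRes_inl_inl h1 hLd hLd1)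
    (chainTwo.effRes_inr_inr h2 hLd hLd2) (chainTwo.effRes_inl_inr h1 h2 hLd hLd1 hLd2), hS1, hS2]
  ring
end

section
/- Let T be a tree on n vertices. A vertex v is a centroid of T if and only if the accessibility index α_T(v) for the simple random walk on T is minimal among all vertices, where α_T(v) = Σ_{i≠v} π_i m_{i,v}. -/
open SimpleGraph Finset Matrix
open scoped Classical

/-- `v` is a centroid of `T`: every component of `T − v` has at most `⌊n/2⌋` vertices. -/
def IsCentroid {V : Type*} [Fintype V] (T : SimpleGraph V) (v : V) : Prop :=
  ∀ w : {u : V // u ≠ v},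
    (((SimpleGraph.induce {u : V | u ≠ v} T).connectedComponentMk w).supp).ncard ≤
      Fintype.card V / 2

/-!
For an edge `xy` of a tree, let `B` be the branch at `y` (the vertices reachable from `y`
without crossing `xy`) and `A` the branch at `x`. Summing the first-step equations of the walk
over `B` gives `m_{y,x} = ∑_{i ∈ B} deg i = 2|B| - 1`, and the maximum principle for functions
harmonic on `B \ {y}` gives `m_{i,x} = m_{i,y} + m_{y,x}` for `i ∈ B`. Hence
`α(x) - α(y) = π(B) m_{y,x} - π(A) m_{x,y} = (m_{y,x}² - m_{x,y}²) / 2|E| = m_{y,x} - m_{x,y}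
= 2(|B| - |A|)`, so `α` strictly decreases across an edge exactly when moving into a branch
with more than `n/2` vertices. At a centroid no branch is that large and `α` decreases along
every path towards it; at any other vertex the neighbour leading into the large branch has
smaller `α`.
-/

namespace SimpleGraph

variable {V : Type*} [Fintype V] {T : SimpleGraph V} {x y v i k : V}

noncomputable def branch (T : SimpleGraph V) (x y : V) : Finset V :=
  {i | (T.deleteEdges {s(x, y)}).Reachable y i}

@[simp]
lemma mem_branch : i ∈ T.branch x y ↔ (T.deleteEdges {s(x, y)}).Reachable y i := by
  simp [branch]

lemma self_mem_branch (T : SimpleGraph V) (x y : V) : y ∈ T.branch x y :=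
  mem_branch.2 .rfl

lemma mem_branch_of_adj (hi : i ∈ T.branch x y) (hik : T.Adj i k) (he : s(i, k) ≠ s(x, y)) :
    k ∈ T.branch x y :=
  mem_branch.2 <| (mem_branch.1 hi).trans <|
    Adj.reachable <| (deleteEdges_adj ..).2 ⟨hik, by simpa using he⟩

lemma mem_branch_of_walk_of_notMem_support {a : V} (p : T.Walk a i) (ha : x ∉ p.support)
    (hy : a ∈ T.branch x y) : i ∈ T.branch x y := by
  refine mem_branch.2 <| (mem_branch.1 hy).trans ⟨p.toDeleteEdges _ fun e he hxy => ?_⟩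
  rw [Set.mem_singleton_iff] at hxy
  exact ha (p.fst_mem_support_of_mem_edges (hxy ▸ he))

lemma IsAcyclic.disjoint_branch (hac : T.IsAcyclic) (hadj : T.Adj x y) :
    Disjoint (T.branch x y) (T.branch y x) := by
  have hb := isBridge_iff.1 (isAcyclic_iff_forall_adj_isBridge.1 hac hadj)
  refine Finset.disjoint_left.2 fun i hxy hyx => hb ?_
  rw [mem_branch, Sym2.eq_swap] at hyx
  exact hyx.trans (mem_branch.1 hxy).symm

lemma IsAcyclic.notMem_branch (hac : T.IsAcyclic) (hadj : T.Adj x y) : x ∉ T.branch x y :=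
  Finset.disjoint_right.1 (hac.disjoint_branch hadj) (self_mem_branch T y x)

lemma IsAcyclic.eq_of_adj_of_notMem_branch (hac : T.IsAcyclic) (hadj : T.Adj x y)
    (hi : i ∈ T.branch x y) (hik : T.Adj i k) (hk : k ∉ T.branch x y) : i = y ∧ k = x := by
  by_contra hne
  refine hk (mem_branch_of_adj hi hik fun he => hne ?_)
  rcases Sym2.eq_iff.1 he with ⟨rfl, rfl⟩ | h
  · exact absurd hi (hac.notMem_branch hadj)
  · exact h

lemma Preconnected.mem_branch_or_mem_branch (hconn : T.Preconnected) (i : V) :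
    i ∈ T.branch x y ∨ i ∈ T.branch y x := by
  suffices H : ∀ {a b : V}, T.Walk a b →
      b ∈ T.branch x y ∨ b ∈ T.branch y x → a ∈ T.branch x y ∨ a ∈ T.branch y x from
    H (hconn i y).some (.inl (self_mem_branch T x y))
  intro a b p
  induction p with
  | nil => exact id
  | @cons a c b hac' q ih =>
    intro hb
    by_cases he : s(a, c) = s(x, y)
    · rcases Sym2.eq_iff.1 he with ⟨rfl, rfl⟩ | ⟨rfl, rfl⟩
      · exact .inr (self_mem_branch T c a)
      · exact .inl (self_mem_branch T c a)
    · rw [Sym2.eq_swap] at he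
      refine (ih hb).imp (mem_branch_of_adj · hac'.symm he) (mem_branch_of_adj · hac'.symm ?_)
      rwa [@Sym2.eq_swap _ y]

lemma IsTree.branch_union_branch (hT : T.IsTree) : T.branch x y ∪ T.branch y x = univ :=
  eq_univ_of_forall fun i => mem_union.2 (hT.connected.preconnected.mem_branch_or_mem_branch i)

lemma IsTree.sum_branch_add_sum_branch {R : Type*} [AddCommMonoid R] (hT : T.IsTree)
    (hadj : T.Adj x y) (f : V → R) :
    ∑ i ∈ T.branch x y, f i + ∑ i ∈ T.branch y x, f i = ∑ i, f i := by
  rw [← sum_union (hT.isAcyclic.disjoint_branch hadj), hT.branch_union_branch]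

lemma IsTree.card_branch_add_card_branch (hT : T.IsTree) (hadj : T.Adj x y) :
    #(T.branch x y) + #(T.branch y x) = Fintype.card V := by
  rw [← card_union_of_disjoint (hT.isAcyclic.disjoint_branch hadj), hT.branch_union_branch,
    card_univ]

lemma induce_branch_connected : (T.induce (T.branch x y : Set V)).Connected := by
  refine (connected_iff_exists_forall_reachable _).2 ⟨⟨y, self_mem_branch T x y⟩, ?_⟩
  rintro ⟨i, hi⟩
  obtain ⟨p⟩ := mem_branch.1 hi
  have hp : ∀ u ∈ (p.mapLe (deleteEdges_le _)).support, u ∈ (T.branch x y : Set V) := by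
    rw [Walk.support_mapLe_eq_support]
    exact fun u hu => mem_branch.2 ⟨p.takeUntil u hu⟩
  exact ((p.mapLe _).induce _ hp).reachable

lemma IsAcyclic.neighborFinset_inter_branch (hac : T.IsAcyclic) (hadj : T.Adj x y)
    (hi : i ∈ T.branch x y) :
    T.neighborFinset i ∩ T.branch x y = (T.neighborFinset i).erase x := by
  ext k
  simp only [mem_inter, mem_erase, mem_neighborFinset]
  constructor
  · rintro ⟨hik, hk⟩
    exact ⟨fun hkx => hac.notMem_branch hadj (hkx ▸ hk), hik⟩
  · rintro ⟨hkx, hik⟩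
    by_contra hk
    exact hkx (hac.eq_of_adj_of_notMem_branch hadj hi hik (hk <| ⟨hik, ·⟩)).2

lemma IsAcyclic.card_neighborFinset_inter_branch (hac : T.IsAcyclic) (hadj : T.Adj x y)
    (hi : i ∈ T.branch x y) :
    #(T.neighborFinset i ∩ T.branch x y) + (if i = y then 1 else 0) = T.degree i := by
  have hxi : x ∈ T.neighborFinset i ↔ i = y := by
    rw [mem_neighborFinset]
    refine ⟨fun hix => ?_, fun hiy => hiy ▸ hadj.symm⟩
    exact (hac.eq_of_adj_of_notMem_branch hadj hi hix (hac.notMem_branch hadj)).1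
  rw [hac.neighborFinset_inter_branch hadj hi, card_erase_eq_ite, card_neighborFinset_eq_degree]
  by_cases hiy : i = y
  · have := (T.degree_pos_iff_exists_adj i).2 ⟨x, hiy ▸ hadj.symm⟩
    simp only [hxi.2 hiy, hiy, if_true]
    omega
  · simp [hiy, hxi]

lemma sum_card_neighborFinset_inter (S : Finset V) :
    ∑ i ∈ S, #(T.neighborFinset i ∩ S) = 2 * #(T.induce (S : Set V)).edgeFinset := by
  rw [← sum_degrees_eq_twice_card_edges, ← Finset.sum_coe_sort S]
  refine Finset.sum_congr rfl fun u _ => ?_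
  symm
  rw [← card_neighborFinset_eq_degree, ← card_map (.subtype (· ∈ (S : Set V)))]
  convert congrArg card (map_neighborFinset_induce (G := T) u)
  ext; simp

lemma sum_sum_neighborFinset_inter {R : Type*} [AddCommMonoid R] (S : Finset V) (f : V → R) :
    ∑ i ∈ S, ∑ k ∈ T.neighborFinset i ∩ S, f k =
      ∑ k ∈ S, #(T.neighborFinset k ∩ S) • f k := by
  rw [sum_comm' (t' := S) (s' := fun k => T.neighborFinset k ∩ S)]
  · exact sum_congr rfl fun k _ => sum_const _
  · intro i k
    simp only [mem_inter, mem_neighborFinset, adj_comm]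
    tauto

lemma IsAcyclic.sum_degree_branch (hac : T.IsAcyclic) (hadj : T.Adj x y) :
    ∑ i ∈ T.branch x y, T.degree i + 1 = 2 * #(T.branch x y) := by
  have hdeg := sum_congr rfl fun i hi => hac.card_neighborFinset_inter_branch hadj hi
  rw [← hdeg, sum_add_distrib, sum_card_neighborFinset_inter, sum_ite_eq',
    if_pos (self_mem_branch T x y)]
  have := IsTree.card_edgeFinset ⟨induce_branch_connected (x := x) (y := y), hac.induce _⟩
  simp only [Finset.coe_sort_coe, Fintype.card_coe] at this
  omega

def IsHarmonicAt (T : SimpleGraph V) (h : V → ℝ) (i : V) : Prop :=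
  T.degree i * h i = ∑ k ∈ T.neighborFinset i, h k

lemma IsHarmonicAt.neg {h : V → ℝ} (hh : T.IsHarmonicAt h i) : T.IsHarmonicAt (-h) i := by
  simp only [IsHarmonicAt, Pi.neg_apply, mul_neg, sum_neg_distrib, neg_inj]
  exact hh

lemma IsHarmonicAt.eq_of_adj {h : V → ℝ} (hh : T.IsHarmonicAt h i)
    (hle : ∀ k, T.Adj i k → h k ≤ h i) (hik : T.Adj i k) : h k = h i := by
  have hsum : ∑ k ∈ T.neighborFinset i, (h i - h k) = 0 := by
    rw [sum_sub_distrib, ← hh, sum_const, card_neighborFinset_eq_degree, nsmul_eq_mul, sub_self]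
  have := (sum_eq_zero_iff_of_nonneg fun k hk => sub_nonneg.2 <|
    hle k ((mem_neighborFinset _ _ _).1 hk)).1 hsum k ((mem_neighborFinset _ _ _).2 hik)
  linarith

lemma Preconnected.le_of_isHarmonicAt (hconn : T.Preconnected) {S : Finset V} {h : V → ℝ}
    (hy : y ∈ S) (hS : ∀ i ∈ S, i ≠ y → ∀ k, T.Adj i k → k ∈ S)
    (hh : ∀ i ∈ S, i ≠ y → T.IsHarmonicAt h i) : ∀ i ∈ S, h i ≤ h y := by
  obtain ⟨m, hmS, hmax⟩ := S.exists_max_image h ⟨y, hy⟩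
  suffices H : ∀ {a b} (p : T.Walk a b), b = y → a ∈ S → h a = h m → h y = h m from
    fun i hi => (H (hconn m y).some rfl hmS rfl).symm ▸ hmax i hi
  intro a b p
  induction p with
  | nil => exact fun hb _ => hb ▸ id
  | @cons a u _ hau q ih =>
    intro hb ha hma
    by_cases hay : a = y
    · exact hay ▸ hma
    have hle : ∀ k, T.Adj a k → h k ≤ h a := fun k hak => hma ▸ hmax k (hS a ha hay k hak)
    exact ih hb (hS a ha hay u hau) (((hh a ha hay).eq_of_adj hle hau).trans hma)

lemma Preconnected.eq_of_isHarmonicAt (hconn : T.Preconnected) {S : Finset V} {h : V → ℝ}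
    (hy : y ∈ S) (hS : ∀ i ∈ S, i ≠ y → ∀ k, T.Adj i k → k ∈ S)
    (hh : ∀ i ∈ S, i ≠ y → T.IsHarmonicAt h i) : ∀ i ∈ S, h i = h y := fun i hi =>
  le_antisymm (hconn.le_of_isHarmonicAt hy hS hh i hi) <| neg_le_neg_iff.1 <|
    hconn.le_of_isHarmonicAt (h := -h) hy hS (fun i hi hiy => (hh i hi hiy).neg) i hi

lemma Preconnected.le_of_forall_adj_mem_branch {β : Type*} [Preorder β] {f : V → β}
    (hconn : T.Preconnected) (h : ∀ a u, T.Adj a u → v ∈ T.branch a u → f u ≤ f a)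
    (w : V) :
    f v ≤ f w := by
  obtain ⟨p, hp⟩ := hconn.exists_isPath w v
  induction p with
  | nil => exact le_rfl
  | @cons a u _ hau q ih =>
    obtain ⟨hq, ha⟩ := (Walk.cons_isPath_iff hau q).1 hp
    exact (ih h hq).trans (h a u hau (mem_branch_of_walk_of_notMem_support q ha
      (self_mem_branch T a u)))

lemma IsAcyclic.exists_card_branch_le_ncard_supp (hac : T.IsAcyclic) (hadj : T.Adj x y)
    (hv : v ∈ T.branch y x) : ∃ w : {u // u ≠ v},
      #(T.branch x y) ≤ ((T.induce {u | u ≠ v}).connectedComponentMk w).supp.ncard := by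
  have hB : (T.branch x y : Set V) ⊆ {u | u ≠ v} := fun i hi hiv =>
    Finset.disjoint_left.1 (hac.disjoint_branch hadj) hi (hiv ▸ hv)
  refine ⟨⟨y, hB (self_mem_branch T x y)⟩, ?_⟩
  have hsub : (T.branch x y : Set V) ⊆
      Subtype.val '' ((T.induce {u | u ≠ v}).connectedComponentMk ⟨y, _⟩).supp := fun i hi =>
    ⟨⟨i, hB hi⟩, ConnectedComponent.sound <| Reachable.symm <|
      (induce_branch_connected.preconnected ⟨y, self_mem_branch T x y⟩ ⟨i, hi⟩).map
        (induceHomOfLE T hB).toHom, rfl⟩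
  rw [← Set.ncard_coe_finset, ← Set.ncard_image_of_injective _ Subtype.val_injective]
  exact Set.ncard_le_ncard hsub

lemma Preconnected.exists_ncard_supp_le_card_branch (hconn : T.Preconnected)
    (w : {u // u ≠ v}) : ∃ z, T.Adj v z ∧
      ((T.induce {u | u ≠ v}).connectedComponentMk w).supp.ncard ≤ #(T.branch v z) := by
  obtain ⟨p, hp⟩ := hconn.exists_isPath v w
  obtain ⟨z, hvz, r, rfl⟩ := p.exists_eq_cons_of_ne (Ne.symm w.2)
  refine ⟨z, hvz, ?_⟩
  have hw : (w : V) ∈ T.branch v z := mem_branch_of_walk_of_notMem_support r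
    ((Walk.cons_isPath_iff hvz r).1 hp).2 (self_mem_branch T v z)
  rw [← Set.ncard_coe_finset]
  refine Set.ncard_le_ncard_of_injOn Subtype.val (fun a ha => ?_) Subtype.val_injective.injOn
  let f : T.induce {u | u ≠ v} →g T.deleteEdges {s(v, z)} :=
    ⟨Subtype.val, fun {a b} hab => (deleteEdges_adj ..).2 ⟨hab, fun he => by
      rcases Sym2.eq_iff.1 (Set.mem_singleton_iff.1 he) with ⟨h, -⟩ | ⟨-, h⟩
      exacts [a.2 h, b.2 h]⟩⟩
  exact mem_branch.2 <| (mem_branch.1 hw).trans ((ConnectedComponent.exact ha).symm.map f)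

end SimpleGraph

section RandomWalk

open SimpleGraph

variable {V : Type*} [Fintype V] {T : SimpleGraph V} {M : V → V → ℝ} {x y i j : V}

lemma IsMFPT.degree_mul (hM : IsMFPT T M) (hij : i ≠ j) :
    T.degree i * M i j = T.degree i + ∑ k ∈ T.neighborFinset i, M k j := by
  rw [hM.2 i j hij, mul_add, mul_one, mul_sum, neighborFinset_eq_filter, sum_filter]
  refine congrArg _ (sum_congr rfl fun k _ => ?_)
  unfold transP
  split_ifs with hik
  · have : (T.degree i : ℝ) ≠ 0 := by
      exact_mod_cast ((T.degree_pos_iff_exists_adj i).2 ⟨k, hik⟩).ne'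
    field_simp
  · simp

lemma IsMFPT.isHarmonicAt_sub (hM : IsMFPT T M) (hix : i ≠ x) (hiy : i ≠ y) :
    T.IsHarmonicAt (fun k => M k x - M k y) i := by
  simp only [IsHarmonicAt, mul_sub, hM.degree_mul hix, hM.degree_mul hiy, sum_sub_distrib]
  ring

lemma IsMFPT.add_of_mem_branch (hM : IsMFPT T M) (hT : T.IsTree) (hadj : T.Adj x y)
    (hi : i ∈ T.branch x y) : M i x = M i y + M y x := by
  have hac := hT.isAcyclic
  have hclosed : ∀ i ∈ T.branch x y, i ≠ y → ∀ k, T.Adj i k → k ∈ T.branch x y :=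
    fun i hi hiy k hik =>
      by_contra fun hk => hiy (hac.eq_of_adj_of_notMem_branch hadj hi hik hk).1
  have hharm : ∀ i ∈ T.branch x y, i ≠ y → T.IsHarmonicAt (fun k => M k x - M k y) i :=
    fun i hi hiy => hM.isHarmonicAt_sub (ne_of_mem_of_not_mem hi (hac.notMem_branch hadj)) hiy
  have :=
    hT.connected.preconnected.eq_of_isHarmonicAt (self_mem_branch T x y) hclosed hharm i hi
  simp only [hM.1 y, sub_zero] at this
  linarith

lemma IsMFPT.eq_sum_degree_branch (hM : IsMFPT T M) (hac : T.IsAcyclic) (hadj : T.Adj x y) :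
    M y x = ∑ i ∈ T.branch x y, (T.degree i : ℝ) := by
  set B := T.branch x y
  have hxB : x ∉ B := hac.notMem_branch hadj
  have hrec : ∑ i ∈ B, T.degree i * M i x
      = ∑ i ∈ B, (T.degree i : ℝ)
        + ∑ i ∈ B, ∑ k ∈ T.neighborFinset i ∩ B, M k x := by
    rw [← sum_add_distrib]
    refine sum_congr rfl fun i hi => ?_
    rw [hM.degree_mul (ne_of_mem_of_not_mem hi hxB)]
    congr 1
    -- the only neighbour of `B` outside `B` is `x`, where `M x x = 0`
    refine (sum_subset inter_subset_left fun k hik hkiB => ?_).symm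
    have hkB : k ∉ B := fun h => hkiB (mem_inter.2 ⟨hik, h⟩)
    have hkx := (hac.eq_of_adj_of_notMem_branch hadj hi ((mem_neighborFinset _ _ _).1 hik) hkB).2
    rw [hkx, hM.1]
  have hsum : ∑ k ∈ B, #(T.neighborFinset k ∩ B) • M k x
      = ∑ k ∈ B, (T.degree k - if k = y then 1 else 0) * M k x :=
    sum_congr rfl fun k hk => by
      rw [nsmul_eq_mul, ← hac.card_neighborFinset_inter_branch hadj hk]
      push_cast
      ring
  rw [sum_sum_neighborFinset_inter, hsum] at hrec
  simp only [sub_mul, ite_mul, one_mul, zero_mul, sum_sub_distrib, sum_ite_eq',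
    if_pos (show y ∈ B from self_mem_branch T x y)] at hrec
  linarith

lemma IsMFPT.eq_two_mul_card_branch_sub_one (hM : IsMFPT T M) (hac : T.IsAcyclic)
    (hadj : T.Adj x y) : M y x = 2 * #(T.branch x y) - 1 := by
  have : ∑ i ∈ T.branch x y, (T.degree i : ℝ) + 1 = 2 * #(T.branch x y) := by
    exact_mod_cast hac.sum_degree_branch hadj
  rw [hM.eq_sum_degree_branch hac hadj]
  linarith

lemma IsMFPT.acc_eq_sum (hM : IsMFPT T M) (v : V) : acc T M v = ∑ i, statPi T i * M i v := by
  rw [acc, sum_filter]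
  refine sum_congr rfl fun i _ => ?_
  split_ifs with hiv
  · rfl
  · rw [not_not.1 hiv, hM.1, mul_zero]

lemma IsMFPT.acc_sub_acc (hM : IsMFPT T M) (hT : T.IsTree) (hadj : T.Adj x y) :
    acc T M x - acc T M y = M y x - M x y := by
  have hac := hT.isAcyclic
  set E : ℝ := 2 * #T.edgeFinset with hEdef
  have hπ : ∀ S : Finset V, ∑ i ∈ S, statPi T i = (∑ i ∈ S, (T.degree i : ℝ)) / E :=
    fun S => by simp only [statPi, sum_div, E]
  have hE : M y x + M x y = E := by
    rw [hM.eq_sum_degree_branch hac hadj, hM.eq_sum_degree_branch hac hadj.symm,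
      hT.sum_branch_add_sum_branch hadj, hEdef]
    exact_mod_cast sum_degrees_eq_twice_card_edges T
  have hEpos : 0 < E := by
    have : 0 < #T.edgeFinset := card_pos.2 ⟨s(x, y), mem_edgeFinset.2 hadj⟩
    positivity
  have hx : acc T M x = ∑ i ∈ T.branch x y, statPi T i * M i y
      + (∑ i ∈ T.branch x y, statPi T i) * M y x
      + ∑ i ∈ T.branch y x, statPi T i * M i x := by
    rw [hM.acc_eq_sum, ← hT.sum_branch_add_sum_branch hadj, sum_mul, ← sum_add_distrib]
    congr 1
    exact sum_congr rfl fun i hi => by rw [hM.add_of_mem_branch hT hadj hi]; ring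
  have hy : acc T M y = ∑ i ∈ T.branch x y, statPi T i * M i y
      + ∑ i ∈ T.branch y x, statPi T i * M i x
      + (∑ i ∈ T.branch y x, statPi T i) * M x y := by
    rw [hM.acc_eq_sum, ← hT.sum_branch_add_sum_branch hadj, add_assoc, sum_mul,
      ← sum_add_distrib]
    congr 1
    exact sum_congr rfl fun i hi => by rw [hM.add_of_mem_branch hT hadj.symm hi]; ring
  rw [hx, hy, hπ, hπ, ← hM.eq_sum_degree_branch hac hadj,
    ← hM.eq_sum_degree_branch hac hadj.symm, ← hE]
  have : M y x + M x y ≠ 0 := hE ▸ hEpos.ne'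
  field_simp
  ring

lemma IsMFPT.acc_le_acc_iff (hM : IsMFPT T M) (hT : T.IsTree) (hadj : T.Adj x y) :
    acc T M x ≤ acc T M y ↔ 2 * #(T.branch x y) ≤ Fintype.card V := by
  have hcard : (#(T.branch x y) : ℝ) + #(T.branch y x) = Fintype.card V := by
    exact_mod_cast hT.card_branch_add_card_branch hadj
  rw [← sub_nonpos, hM.acc_sub_acc hT hadj,
    hM.eq_two_mul_card_branch_sub_one hT.isAcyclic hadj,
    hM.eq_two_mul_card_branch_sub_one hT.isAcyclic hadj.symm, ← Nat.cast_le (α := ℝ)]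
  push_cast
  constructor <;> intro <;> linarith

end RandomWalk

/-- a vertex of a tree is a centroid iff its accessibility index
`α_T(v)` for the simple random walk is minimal among all vertices. -/
theorem tree_centroid_iff_acc_min {V : Type*} [Fintype V] (T : SimpleGraph V)
    (hT : T.IsTree) (M : V → V → ℝ) (hM : IsMFPT T M) (v : V) :
    IsCentroid T v ↔ ∀ w : V, acc T M v ≤ acc T M w := by
  constructor
  · intro hcent
    refine hT.connected.preconnected.le_of_forall_adj_mem_branch fun a u hau hv => ?_
    obtain ⟨w, hw⟩ := hT.isAcyclic.exists_card_branch_le_ncard_supp hau.symm hv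
    have := hcent w
    rw [hM.acc_le_acc_iff hT hau.symm]
    omega
  · intro hmin w
    obtain ⟨z, hvz, hw⟩ := hT.connected.preconnected.exists_ncard_supp_le_card_branch w
    have := (hM.acc_le_acc_iff hT hvz).1 (hmin z)
    omega
end

section
/- For the simple random walk on a connected graph G with transition matrix P and stationary distribution π, the quantity Σ_{j ≠ i} π_j m_{i,j} is independent of the starting vertex i (Kemeny's constant), where m_{i,j} are the mean first passage times. -/
/-! Let `K i = ∑_j π_j m_{i,j}` (the term `j = i` vanishes). The first-step equations together
with `m_{j,j} = 0` say `M = J + P M - diag r`, where `J` is the all-ones matrix and `r_j` the mean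
return time to `j`. Multiplying on the left by `π` gives Kac's formula `π_j r_j = 1`; multiplying on
the right by `π` then gives `K = 1 + P K - 1`, so `K` is harmonic for the walk. A harmonic function
of the simple random walk lies in the kernel of the Laplacian, hence is constant on a connected
graph. -/

open SimpleGraph Finset Matrix
open scoped Classical

namespace Matrix

variable {V : Type*} [Fintype V]

def IsMeanFirstPassage (P M : Matrix V V ℝ) : Prop :=
  (∀ j, M j j = 0) ∧ ∀ i j, i ≠ j → M i j = 1 + ∑ k, P i k * M k j

def meanReturnTime (P M : Matrix V V ℝ) (j : V) : ℝ :=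
  1 + ∑ k, P j k * M k j

variable {P M : Matrix V V ℝ}

theorem IsMeanFirstPassage.eq_ones_add_mul_sub_diagonal (hM : IsMeanFirstPassage P M) :
    M = of (fun _ _ => 1) + P * M - diagonal (meanReturnTime P M) := by
  ext i j
  by_cases hij : i = j
  · subst hij
    simp [hM.1, meanReturnTime, mul_apply]
  · simp [hM.2 i j hij, diagonal_apply_ne _ hij, mul_apply]

theorem IsMeanFirstPassage.stationary_mul_meanReturnTime_eq_one (hM : IsMeanFirstPassage P M)
    {π : V → ℝ} (hπ : π ᵥ* P = π) (hπ1 : ∑ j, π j = 1) (j : V) :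
    π j * meanReturnTime P M j = 1 := by
  have h := congrFun (congrArg (π ᵥ* ·) hM.eq_ones_add_mul_sub_diagonal) j
  simp only [vecMul_sub, vecMul_add, ← vecMul_vecMul, hπ, vecMul_diagonal, Pi.add_apply,
    Pi.sub_apply] at h
  have hones : (π ᵥ* of fun _ _ => (1 : ℝ)) j = 1 := by
    simp [vecMul, dotProduct, hπ1]
  linarith

theorem IsMeanFirstPassage.mulVec_mulVec_stationary (hM : IsMeanFirstPassage P M)
    {π : V → ℝ} (hπ : π ᵥ* P = π) (hπ1 : ∑ j, π j = 1) :
    P *ᵥ (M *ᵥ π) = M *ᵥ π := by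
  ext i
  have h := congrFun (congrArg (· *ᵥ π) hM.eq_ones_add_mul_sub_diagonal) i
  simp only [sub_mulVec, add_mulVec, ← mulVec_mulVec, mulVec_diagonal, Pi.add_apply,
    Pi.sub_apply] at h
  have hones : ((of fun _ _ => (1 : ℝ)) *ᵥ π) i = 1 := by
    simp [mulVec, dotProduct, hπ1]
  rw [hones, mul_comm, hM.stationary_mul_meanReturnTime_eq_one hπ hπ1 i] at h
  linarith

end Matrix

namespace SimpleGraph

variable {V : Type*} [Fintype V] (G : SimpleGraph V)

theorem statPi_mul_transP (i k : V) :
    statPi G i * transP G i k = if G.Adj i k then 1 / (2 * (G.edgeFinset.card : ℝ)) else 0 := by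
  unfold statPi transP
  split_ifs with h
  · have : (G.degree i : ℝ) ≠ 0 := by exact_mod_cast h.degree_pos_left.ne'
    field_simp
  · rw [mul_zero]

theorem statPi_vecMul_transP : statPi G ᵥ* transP G = statPi G := by
  ext k
  simp only [vecMul, dotProduct, statPi_mul_transP, adj_comm _ _ k]
  rw [← Finset.sum_filter, ← neighborFinset_eq_filter, Finset.sum_const,
    card_neighborFinset_eq_degree, nsmul_eq_mul, statPi]
  ring

theorem sum_statPi (hG : G ≠ ⊥) : ∑ v, statPi G v = 1 := by
  have hm : (G.edgeFinset.card : ℝ) ≠ 0 := by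
    exact_mod_cast (edgeFinset_nonempty.2 hG).card_pos.ne'
  simp only [statPi, ← Finset.sum_div]
  rw [← Nat.cast_sum, sum_degrees_eq_twice_card_edges]
  push_cast
  field_simp

theorem lapMatrix_mulVec_eq_zero_of_transP_mulVec {f : V → ℝ} (hf : transP G *ᵥ f = f) :
    G.lapMatrix ℝ *ᵥ f = 0 := by
  ext v
  rw [lapMatrix_mulVec_apply, ← congrFun hf v]
  simp only [mulVec, dotProduct, transP, ite_mul, zero_mul, Finset.sum_ite, Finset.sum_const_zero,
    add_zero, ← Finset.mul_sum, ← neighborFinset_eq_filter]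
  rw [Pi.zero_apply, ← mul_assoc, sub_eq_zero]
  by_cases hv : G.degree v = 0
  · have : G.neighborFinset v = ∅ := by rwa [← Finset.card_eq_zero, card_neighborFinset_eq_degree]
    simp [this]
  · rw [mul_one_div_cancel (by exact_mod_cast hv), one_mul]

end SimpleGraph

/-- `∑_{j ≠ i} π_j m_{i,j}` is independent of the starting vertex `i`
(Kemeny's constant). -/
theorem kemeny_independent {V : Type*} [Fintype V] (G : SimpleGraph V)
    (hG : G.Connected) (M : V → V → ℝ) (hM : IsMFPT G M) (i i' : V) :
    ∑ j ∈ Finset.univ.filter (· ≠ i), statPi G j * M i j =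
      ∑ j ∈ Finset.univ.filter (· ≠ i'), statPi G j * M i' j := by
  rcases subsingleton_or_nontrivial V with hV | hV
  · rw [Subsingleton.elim i i']
  have hharm : transP G *ᵥ (M *ᵥ statPi G) = M *ᵥ statPi G :=
    IsMeanFirstPassage.mulVec_mulVec_stationary hM G.statPi_vecMul_transP
      (G.sum_statPi fun h => not_connected_bot (h ▸ hG))
  have hconst := (lapMatrix_mulVec_eq_zero_iff_forall_reachable G).1
    (G.lapMatrix_mulVec_eq_zero_of_transP_mulVec hharm) i i' (hG.preconnected i i')
  simpa [filter_ne', hM.1, mulVec, dotProduct, mul_comm] using hconst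
end
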